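/- arXiv:math/0508002 — 4 statements merged into one kernel-verified Lean document; each statement's English description precedes it below -/
import Mathlib

section
/- Let α ∈ (0,1) and t > 0, and define f_t(z) = (z + 2√t·√(α/(1−α)))^{1−α} · (z − 2√t·√((1−α)/α))^{α} for z in the open upper half-plane ℍ, using principal branch complex powers. Then f_t satisfies the hydrodynamic normalization at infinity with half-plane capacity 2t: as |z| → ∞ with z ∈ ℍ, one has f_t(z) − z → 0 and z·(f_t(z) − z) → −2t; that is, f_t(z) = z − 2t/z + o(1/z). -/
open Complex Filter Topology

lemma TSA_logTaylor_three (w : ℂ) : Complex.logTaylor 3 w = w - w ^ 2 / 2 := by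
  simp [Complex.logTaylor_succ, Complex.logTaylor_zero]
  ring

/-- second-order Taylor remainder of `log (1 + u)` beats `u^3`. -/
lemma TSA_log_remainder {l : Filter ℂ} {u v : ℂ → ℂ}
    (hu : Filter.Tendsto u l (nhds 0))
    (hv : Filter.Tendsto (fun z => v z * u z ^ 3) l (nhds 0)) :
    Filter.Tendsto (fun z => v z * (Complex.log (1 + u z) - u z + u z ^ 2 / 2)) l (nhds 0) := by
  have hsmall : ∀ᶠ z in l, ‖u z‖ < 1 / 2 := by
    have := hu.norm
    simp only [norm_zero] at this
    exact this.eventually_lt_const (by norm_num)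
  have hbound : ∀ᶠ z in l,
      ‖v z * (Complex.log (1 + u z) - u z + u z ^ 2 / 2)‖ ≤
        ‖v z * u z ^ 3‖ * ((1 - ‖u z‖)⁻¹ / 3) := by
    filter_upwards [hsmall] with z hz
    have h1 : ‖Complex.log (1 + u z) - Complex.logTaylor 3 (u z)‖ ≤
        ‖u z‖ ^ 3 * (1 - ‖u z‖)⁻¹ / 3 := by
      have := Complex.norm_log_sub_logTaylor_le 2 (z := u z) (by linarith)
      norm_num at this ⊢
      exact this
    rw [TSA_logTaylor_three] at h1
    have h2 : Complex.log (1 + u z) - u z + u z ^ 2 / 2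
        = Complex.log (1 + u z) - (u z - u z ^ 2 / 2) := by ring
    rw [norm_mul, norm_mul, h2, norm_pow]
    calc ‖v z‖ * ‖Complex.log (1 + u z) - (u z - u z ^ 2 / 2)‖
        ≤ ‖v z‖ * (‖u z‖ ^ 3 * (1 - ‖u z‖)⁻¹ / 3) :=
          mul_le_mul_of_nonneg_left h1 (norm_nonneg _)
      _ = ‖v z‖ * ‖u z‖ ^ 3 * ((1 - ‖u z‖)⁻¹ / 3) := by ring
  have hden : Filter.Tendsto (fun z => (1 - ‖u z‖)⁻¹ / 3) l (nhds ((1 - ‖(0:ℂ)‖)⁻¹ / 3)) :=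
    ((tendsto_const_nhds.sub hu.norm).inv₀ (by norm_num)).div_const 3
  have hrhs : Filter.Tendsto (fun z => ‖v z * u z ^ 3‖ * ((1 - ‖u z‖)⁻¹ / 3)) l (nhds 0) := by
    simpa using hv.norm.mul hden
  exact squeeze_zero_norm' hbound hrhs

lemma TSA_log_mul {x y : ℂ} (hx : 0 ≤ x.im) (hy : y.im < 0) (hx0 : x ≠ 0) :
    Complex.log (x * y) = Complex.log x + Complex.log y := by
  have hy0 : y ≠ 0 := fun h => by simp [h] at hy
  refine Complex.log_mul hx0 hy0 ⟨?_, ?_⟩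
  · have h1 : -Real.pi < y.arg := Complex.neg_pi_lt_arg y
    have h2 : 0 ≤ x.arg := Complex.arg_nonneg_iff.mpr hx
    linarith
  · have h1 : y.arg < 0 := Complex.arg_neg_iff.mpr hy
    have h2 : x.arg ≤ Real.pi := Complex.arg_le_pi x
    linarith

/-- The pointwise exp/log form of the tilted slit map on the upper half-plane. -/
lemma TSA_pointwise (α : ℝ) (a b : ℝ) (ha : 0 < a) (hb : 0 < b) (z : ℂ) (hz : 0 < z.im) :
    (z + (a:ℂ)) ^ ((1 : ℂ) - (α : ℂ)) * (z - (b:ℂ)) ^ ((α : ℝ) : ℂ)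
    = z * Complex.exp ((1 - (α:ℂ)) * Complex.log (1 + (a:ℂ)/z)
        - (α:ℂ) * Complex.log (1 + (b:ℂ)/(z - (b:ℂ)))) := by
  have hz0 : z ≠ 0 := fun h => by simp [h] at hz
  have hzb : z - (b:ℂ) ≠ 0 := by
    intro h
    rw [sub_eq_zero] at h
    rw [h] at hz
    simp at hz
  have hza : z + (a:ℂ) ≠ 0 := by
    intro h
    have : (z + (a:ℂ)).im = z.im := by simp
    rw [h] at this
    simp at this
    linarith
  have him1 : ((1:ℂ) + (a:ℂ)/z).im < 0 := by
    have : ((a:ℂ)/z).im = -a * z.im / Complex.normSq z := by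
      simp [Complex.div_im]
      ring
    have hn : 0 < Complex.normSq z := Complex.normSq_pos.mpr hz0
    simp only [Complex.add_im, Complex.one_im, this, zero_add]
    have : 0 < a * z.im := mul_pos ha hz
    rw [neg_mul, neg_div]
    simp only [Left.neg_neg_iff]
    positivity
  have him2 : ((1:ℂ) + (b:ℂ)/(z - (b:ℂ))).im < 0 := by
    have hzbim : (z - (b:ℂ)).im = z.im := by simp
    have : ((b:ℂ)/(z-(b:ℂ))).im = -b * z.im / Complex.normSq (z-(b:ℂ)) := by
      simp [Complex.div_im, hzbim]
      ring
    have hn : 0 < Complex.normSq (z-(b:ℂ)) := Complex.normSq_pos.mpr hzb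
    simp only [Complex.add_im, Complex.one_im, this, zero_add]
    have : 0 < b * z.im := mul_pos hb hz
    rw [neg_mul, neg_div]
    simp only [Left.neg_neg_iff]
    positivity
  have hlog1 : Complex.log (z + (a:ℂ)) = Complex.log z + Complex.log (1 + (a:ℂ)/z) := by
    have h := TSA_log_mul (x := z) (y := 1 + (a:ℂ)/z) hz.le him1 hz0
    rw [mul_add, mul_one, mul_div_cancel₀ _ hz0] at h
    exact h
  have hlog2 : Complex.log (z - (b:ℂ)) = Complex.log z - Complex.log (1 + (b:ℂ)/(z - (b:ℂ))) := by
    have hzbim : (z - (b:ℂ)).im = z.im := by simp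
    have h := TSA_log_mul (x := z - (b:ℂ)) (y := 1 + (b:ℂ)/(z - (b:ℂ)))
      (by rw [hzbim]; exact hz.le) him2 hzb
    rw [mul_add, mul_one, mul_div_cancel₀ _ hzb] at h
    have hsb : (z - (b:ℂ)) + (b:ℂ) = z := by ring
    rw [hsb] at h
    rw [h]; ring
  rw [Complex.cpow_def_of_ne_zero hza, Complex.cpow_def_of_ne_zero hzb, hlog1, hlog2,
    ← Complex.exp_add]
  rw [show z * Complex.exp ((1 - (α:ℂ)) * Complex.log (1 + (a:ℂ)/z)
        - (α:ℂ) * Complex.log (1 + (b:ℂ)/(z - (b:ℂ))))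
      = Complex.exp (Complex.log z + ((1 - (α:ℂ)) * Complex.log (1 + (a:ℂ)/z)
        - (α:ℂ) * Complex.log (1 + (b:ℂ)/(z - (b:ℂ))))) from by
    rw [Complex.exp_add, Complex.exp_log hz0]]
  congr 1
  ring

lemma TSA_alg (α a b : ℝ) (z : ℂ) (hz0 : z ≠ 0) (hzb : z - (b:ℂ) ≠ 0)
    (hkeyC : (1 - (α:ℂ)) * (a:ℂ) = (α:ℂ) * (b:ℂ)) (L1 L2 : ℂ) :
    (-(1 - (α:ℂ)) * ((a:ℂ) * (b:ℂ))) * (z / (z - (b:ℂ)))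
      - (1 - (α:ℂ)) * (a:ℂ) ^ 2 / 2
      + ((α:ℂ) * (b:ℂ) ^ 2 / 2) * (z / (z - (b:ℂ))) ^ 2
      + (1 - (α:ℂ)) * (z ^ 2 * (L1 - (a:ℂ)/z + ((a:ℂ)/z) ^ 2 / 2))
      - (α:ℂ) * (z ^ 2 * (L2 - (b:ℂ)/(z - (b:ℂ)) + ((b:ℂ)/(z - (b:ℂ))) ^ 2 / 2))
    = z ^ 2 * ((1 - (α:ℂ)) * L1 - (α:ℂ) * L2) := by
  have h1 : z ^ 2 * ((a:ℂ)/z) = (a:ℂ) * z := by field_simp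
  have h2 : z ^ 2 * ((a:ℂ)/z) ^ 2 = (a:ℂ) ^ 2 := by field_simp
  have h3 : z ^ 2 * ((b:ℂ)/(z - (b:ℂ))) = (b:ℂ) * z * (z/(z - (b:ℂ))) := by ring
  have h4 : z ^ 2 * ((b:ℂ)/(z - (b:ℂ))) ^ 2 = (b:ℂ) ^ 2 * (z/(z - (b:ℂ))) ^ 2 := by ring
  have hQz : (z - (b:ℂ)) * (z/(z - (b:ℂ))) = z := by field_simp
  linear_combination (-(1 - (α:ℂ))) * h1 + ((1 - (α:ℂ))/2) * h2 + (α:ℂ) * h3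
    - ((α:ℂ)/2) * h4 - (z * (z/(z - (b:ℂ)))) * hkeyC + ((1 - (α:ℂ)) * (a:ℂ)) * hQz

/-- The tilted slit map `f_t(z) = (z + 2√t·√(α/(1−α)))^{1−α} · (z − 2√t·√((1−α)/α))^α`
(principal branch powers) satisfies the hydrodynamic normalization at infinity with
half-plane capacity `2t`: as `|z| → ∞` with `z` in the upper half-plane,
`f_t(z) − z → 0` and `z·(f_t(z) − z) → −2t`. -/
theorem tilted_slit_hydrodynamic_normalization
    (α t : ℝ) (hα : α ∈ Set.Ioo (0 : ℝ) 1) (ht : 0 < t)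
    (f : ℂ → ℂ)
    (hf : ∀ z : ℂ, f z =
      (z + ((2 * Real.sqrt t * Real.sqrt (α / (1 - α)) : ℝ) : ℂ)) ^ ((1 : ℂ) - (α : ℂ)) *
      (z - ((2 * Real.sqrt t * Real.sqrt ((1 - α) / α) : ℝ) : ℂ)) ^ ((α : ℝ) : ℂ)) :
    Filter.Tendsto (fun z : ℂ => f z - z)
      (Filter.comap (fun z : ℂ => ‖z‖) Filter.atTop ⊓ Filter.principal {z : ℂ | 0 < z.im})
      (nhds 0) ∧
    Filter.Tendsto (fun z : ℂ => z * (f z - z))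
      (Filter.comap (fun z : ℂ => ‖z‖) Filter.atTop ⊓ Filter.principal {z : ℂ | 0 < z.im})
      (nhds (-2 * (t : ℂ))) := by
  obtain ⟨hα0, hα1⟩ := hα
  have h1α : 0 < 1 - α := by linarith
  set a : ℝ := 2 * Real.sqrt t * Real.sqrt (α / (1 - α)) with ha_def
  set b : ℝ := 2 * Real.sqrt t * Real.sqrt ((1 - α) / α) with hb_def
  have hst : 0 < Real.sqrt t := Real.sqrt_pos.mpr ht
  have hsa : 0 < Real.sqrt (α / (1 - α)) := Real.sqrt_pos.mpr (div_pos hα0 h1α)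
  have hsb : 0 < Real.sqrt ((1 - α) / α) := Real.sqrt_pos.mpr (div_pos h1α hα0)
  have ha : 0 < a := by rw [ha_def]; exact mul_pos (mul_pos (by norm_num) hst) hsa
  have hb : 0 < b := by rw [hb_def]; exact mul_pos (mul_pos (by norm_num) hst) hsb
  have hsq_t : Real.sqrt t ^ 2 = t := Real.sq_sqrt ht.le
  have hsq_a : Real.sqrt (α / (1 - α)) ^ 2 = α / (1 - α) := Real.sq_sqrt (div_pos hα0 h1α).le
  have hsq_b : Real.sqrt ((1 - α) / α) ^ 2 = (1 - α) / α := Real.sq_sqrt (div_pos h1α hα0).le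
  -- the three key real identities
  have hab : a * b = 4 * t := by
    have hprod : Real.sqrt (α / (1 - α)) * Real.sqrt ((1 - α) / α) = 1 := by
      rw [← Real.sqrt_mul (div_pos hα0 h1α).le,
        show α / (1 - α) * ((1 - α) / α) = 1 from by field_simp]
      exact Real.sqrt_one
    have h : a * b = 4 * Real.sqrt t ^ 2 * (Real.sqrt (α / (1 - α)) * Real.sqrt ((1 - α) / α)) := by
      rw [ha_def, hb_def]; ring
    rw [h, hprod, hsq_t]; ring
  have ha2 : (1 - α) * a ^ 2 = 4 * t * α  := by
    have h : a ^ 2 = 4 * Real.sqrt t ^ 2 * Real.sqrt (α / (1 - α)) ^ 2 := by rw [ha_def]; ring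
    rw [h, hsq_t, hsq_a]
    field_simp
  have hb2 : α * b ^ 2 = 4 * t * (1 - α) := by
    have h : b ^ 2 = 4 * Real.sqrt t ^ 2 * Real.sqrt ((1 - α) / α) ^ 2 := by rw [hb_def]; ring
    rw [h, hsq_t, hsq_b]
    field_simp
  have hkey : (1 - α) * a = α * b := by
    have e1 : (1 - α) * Real.sqrt (α / (1 - α)) = Real.sqrt (α * (1 - α)) := by
      rw [show α * (1 - α) = (1 - α) ^ 2 * (α / (1 - α)) from by field_simp,
        Real.sqrt_mul (sq_nonneg _), Real.sqrt_sq h1α.le]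
    have e2 : α * Real.sqrt ((1 - α) / α) = Real.sqrt (α * (1 - α)) := by
      rw [show α * (1 - α) = α ^ 2 * ((1 - α) / α) from by field_simp,
        Real.sqrt_mul (sq_nonneg _), Real.sqrt_sq hα0.le]
    rw [ha_def, hb_def]
    linear_combination (2 * Real.sqrt t) * e1 - (2 * Real.sqrt t) * e2
  have habC : (a : ℂ) * (b : ℂ) = 4 * (t : ℂ) := by exact_mod_cast hab
  have ha2C : (1 - (α:ℂ)) * (a:ℂ) ^ 2 = 4 * (t:ℂ) * (α:ℂ) := by exact_mod_cast ha2
  have hb2C : (α:ℂ) * (b:ℂ) ^ 2 = 4 * (t:ℂ) * (1 - (α:ℂ)) := by exact_mod_cast hb2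
  have hkeyC : (1 - (α:ℂ)) * (a:ℂ) = (α:ℂ) * (b:ℂ) := by exact_mod_cast hkey
  -- the filter
  set l : Filter ℂ := Filter.comap (fun z : ℂ => ‖z‖) Filter.atTop ⊓ Filter.principal {z : ℂ | 0 < z.im}
    with hl
  have him : ∀ᶠ z in l, 0 < z.im := by
    rw [hl, Filter.eventually_inf_principal]
    exact Filter.Eventually.of_forall fun z hz => hz
  have habsTop : Filter.Tendsto (fun z : ℂ => ‖z‖) l Filter.atTop :=
    Filter.tendsto_comap.mono_left inf_le_left
  have hinv : Filter.Tendsto (fun z : ℂ => z⁻¹) l (nhds 0) := by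
    rw [tendsto_zero_iff_norm_tendsto_zero]
    simp only [norm_inv]
    exact tendsto_inv_atTop_zero.comp habsTop
  have hb_inv : Filter.Tendsto (fun z : ℂ => (z - (b:ℂ))⁻¹) l (nhds 0) := by
    have h1 : Filter.Tendsto (fun z : ℂ => ‖z - (b:ℂ)‖) l Filter.atTop := by
      apply tendsto_atTop_mono ?_ (tendsto_atTop_add_const_right _ (-b) habsTop)
      intro z
      have h2 : ‖z‖ - ‖((b:ℂ))‖ ≤ ‖z - (b:ℂ)‖ := by
        have := norm_sub_norm_le z ((b:ℂ))
        simpa using this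
      have h3 : ‖((b:ℂ))‖ = b := by
        simp [abs_of_pos hb]
      rw [h3] at h2
      linarith
    rw [tendsto_zero_iff_norm_tendsto_zero]
    simp only [norm_inv]
    exact tendsto_inv_atTop_zero.comp h1
  have hw2lim : Filter.Tendsto (fun z : ℂ => (b:ℂ) / (z - (b:ℂ))) l (nhds 0) := by
    have := hb_inv.const_mul ((b:ℂ))
    simpa [div_eq_mul_inv] using this
  have hQ : Filter.Tendsto (fun z : ℂ => z / (z - (b:ℂ))) l (nhds 1) := by
    have h1 : Filter.Tendsto (fun z : ℂ => 1 + (b:ℂ) / (z - (b:ℂ))) l (nhds 1) := by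
      simpa using tendsto_const_nhds.add hw2lim
    apply h1.congr'
    filter_upwards [him] with z hz
    have hzb : z - (b:ℂ) ≠ 0 := by
      intro h
      rw [sub_eq_zero] at h
      rw [h] at hz
      simp at hz
    field_simp
    ring
  -- limits of the remainder terms
  have hw1lim : Filter.Tendsto (fun z : ℂ => (a:ℂ) / z) l (nhds 0) := by
    have := hinv.const_mul ((a:ℂ))
    simpa [div_eq_mul_inv] using this
  have hR1 : Filter.Tendsto
      (fun z : ℂ => z ^ 2 * (Complex.log (1 + (a:ℂ)/z) - (a:ℂ)/z + ((a:ℂ)/z) ^ 2 / 2))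
      l (nhds 0) := by
    apply TSA_log_remainder hw1lim
    have h1 : Filter.Tendsto (fun z : ℂ => (a:ℂ) ^ 3 * z⁻¹) l (nhds 0) := by
      simpa using hinv.const_mul ((a:ℂ) ^ 3)
    apply h1.congr'
    filter_upwards [him] with z hz
    have hz0 : z ≠ 0 := fun h => by simp [h] at hz
    field_simp
  have hR2 : Filter.Tendsto
      (fun z : ℂ => z ^ 2 * (Complex.log (1 + (b:ℂ)/(z - (b:ℂ))) - (b:ℂ)/(z - (b:ℂ))
        + ((b:ℂ)/(z - (b:ℂ))) ^ 2 / 2)) l (nhds 0) := by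
    apply TSA_log_remainder hw2lim
    have h1 : Filter.Tendsto (fun z : ℂ => ((b:ℂ) ^ 3 * (z / (z - (b:ℂ))) ^ 2) * (z - (b:ℂ))⁻¹)
        l (nhds 0) := by
      have := ((tendsto_const_nhds : Filter.Tendsto (fun _ : ℂ => ((b:ℂ) ^ 3)) l (nhds ((b:ℂ) ^ 3))).mul (hQ.pow 2)).mul hb_inv
      simpa using this
    apply h1.congr'
    filter_upwards [him] with z hz
    have hzb : z - (b:ℂ) ≠ 0 := by
      intro h
      rw [sub_eq_zero] at h
      rw [h] at hz
      simp at hz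
    field_simp
  -- Part A : z^2 * M z  →  -2t
  have hA : Filter.Tendsto (fun z : ℂ => z ^ 2 *
      ((1 - (α:ℂ)) * Complex.log (1 + (a:ℂ)/z)
        - (α:ℂ) * Complex.log (1 + (b:ℂ)/(z - (b:ℂ))))) l (nhds (-2 * (t:ℂ))) := by
    have hG : Filter.Tendsto (fun z : ℂ =>
        (-(1 - (α:ℂ)) * ((a:ℂ) * (b:ℂ))) * (z / (z - (b:ℂ)))
          - (1 - (α:ℂ)) * (a:ℂ) ^ 2 / 2
          + ((α:ℂ) * (b:ℂ) ^ 2 / 2) * (z / (z - (b:ℂ))) ^ 2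
          + (1 - (α:ℂ)) * (z ^ 2 * (Complex.log (1 + (a:ℂ)/z) - (a:ℂ)/z + ((a:ℂ)/z) ^ 2 / 2))
          - (α:ℂ) * (z ^ 2 * (Complex.log (1 + (b:ℂ)/(z - (b:ℂ))) - (b:ℂ)/(z - (b:ℂ))
              + ((b:ℂ)/(z - (b:ℂ))) ^ 2 / 2))) l
        (nhds ((-(1 - (α:ℂ)) * ((a:ℂ) * (b:ℂ))) * 1 - (1 - (α:ℂ)) * (a:ℂ) ^ 2 / 2
          + ((α:ℂ) * (b:ℂ) ^ 2 / 2) * 1 ^ 2 + (1 - (α:ℂ)) * 0 - (α:ℂ) * 0)) := by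
      exact ((((tendsto_const_nhds.mul hQ).sub tendsto_const_nhds).add
        (tendsto_const_nhds.mul (hQ.pow 2))).add (tendsto_const_nhds.mul hR1)).sub
        (tendsto_const_nhds.mul hR2)
    have hval : (-(1 - (α:ℂ)) * ((a:ℂ) * (b:ℂ))) * 1 - (1 - (α:ℂ)) * (a:ℂ) ^ 2 / 2
          + ((α:ℂ) * (b:ℂ) ^ 2 / 2) * 1 ^ 2 + (1 - (α:ℂ)) * 0 - (α:ℂ) * 0
        = -2 * (t:ℂ) := by
      linear_combination (-(1 - (α:ℂ))) * habC - (1/2 : ℂ) * ha2C + (1/2 : ℂ) * hb2C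
    rw [hval] at hG
    apply hG.congr'
    filter_upwards [him] with z hz
    have hz0 : z ≠ 0 := fun h => by simp [h] at hz
    have hzb : z - (b:ℂ) ≠ 0 := by
      intro h
      rw [sub_eq_zero] at h
      rw [h] at hz
      simp at hz
    exact TSA_alg α a b z hz0 hzb hkeyC _ _
  -- Part B : z^2 * (exp (M z) - 1 - M z) → 0
  have hM0 : Filter.Tendsto (fun z : ℂ =>
      (1 - (α:ℂ)) * Complex.log (1 + (a:ℂ)/z)
        - (α:ℂ) * Complex.log (1 + (b:ℂ)/(z - (b:ℂ)))) l (nhds 0) := by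
    have h1 := (hinv.pow 2).mul hA
    apply Filter.Tendsto.congr' ?_ (by simpa using h1)
    filter_upwards [him] with z hz
    have hz0 : z ≠ 0 := fun h => by simp [h] at hz
    have h2 : (z ^ 2)⁻¹ * z ^ 2 = 1 := by field_simp
    calc (z ^ 2)⁻¹ * (z ^ 2 * ((1 - (α:ℂ)) * Complex.log (1 + (a:ℂ)/z)
          - (α:ℂ) * Complex.log (1 + (b:ℂ)/(z - (b:ℂ)))))
        = ((z ^ 2)⁻¹ * z ^ 2) * ((1 - (α:ℂ)) * Complex.log (1 + (a:ℂ)/z)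
          - (α:ℂ) * Complex.log (1 + (b:ℂ)/(z - (b:ℂ)))) := by ring
      _ = _ := by rw [h2, one_mul]
  have hB : Filter.Tendsto (fun z : ℂ => z ^ 2 *
      (Complex.exp ((1 - (α:ℂ)) * Complex.log (1 + (a:ℂ)/z)
          - (α:ℂ) * Complex.log (1 + (b:ℂ)/(z - (b:ℂ)))) - 1
        - ((1 - (α:ℂ)) * Complex.log (1 + (a:ℂ)/z)
          - (α:ℂ) * Complex.log (1 + (b:ℂ)/(z - (b:ℂ)))))) l (nhds 0) := by
    have hsmallM : ∀ᶠ z in l, ‖(1 - (α:ℂ)) * Complex.log (1 + (a:ℂ)/z)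
        - (α:ℂ) * Complex.log (1 + (b:ℂ)/(z - (b:ℂ)))‖ ≤ 1 := by
      have := hM0.norm
      simp only [norm_zero] at this
      exact (this.eventually_lt_const (by norm_num : (0:ℝ) < 1)).mono fun z h => le_of_lt h
    have hbound : ∀ᶠ z in l, ‖z ^ 2 *
        (Complex.exp ((1 - (α:ℂ)) * Complex.log (1 + (a:ℂ)/z)
            - (α:ℂ) * Complex.log (1 + (b:ℂ)/(z - (b:ℂ)))) - 1
          - ((1 - (α:ℂ)) * Complex.log (1 + (a:ℂ)/z)
            - (α:ℂ) * Complex.log (1 + (b:ℂ)/(z - (b:ℂ)))))‖ ≤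
        ‖z ^ 2 * ((1 - (α:ℂ)) * Complex.log (1 + (a:ℂ)/z)
            - (α:ℂ) * Complex.log (1 + (b:ℂ)/(z - (b:ℂ))))‖ *
          ‖(1 - (α:ℂ)) * Complex.log (1 + (a:ℂ)/z)
            - (α:ℂ) * Complex.log (1 + (b:ℂ)/(z - (b:ℂ)))‖ := by
      filter_upwards [hsmallM] with z hz
      set m : ℂ := (1 - (α:ℂ)) * Complex.log (1 + (a:ℂ)/z)
        - (α:ℂ) * Complex.log (1 + (b:ℂ)/(z - (b:ℂ))) with hm
      have h1 : ‖Complex.exp m - 1 - m‖ ≤ ‖m‖ ^ 2 := by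
        have := Complex.norm_exp_sub_one_sub_id_le (x := m) (by
          exact hz)
        simpa using this
      rw [norm_mul, norm_mul]
      calc ‖z ^ 2‖ * ‖Complex.exp m - 1 - m‖ ≤ ‖z ^ 2‖ * ‖m‖ ^ 2 :=
            mul_le_mul_of_nonneg_left h1 (norm_nonneg _)
        _ = ‖z ^ 2‖ * ‖m‖ * ‖m‖ := by ring
    have hrhs : Filter.Tendsto (fun z : ℂ =>
        ‖z ^ 2 * ((1 - (α:ℂ)) * Complex.log (1 + (a:ℂ)/z)
            - (α:ℂ) * Complex.log (1 + (b:ℂ)/(z - (b:ℂ))))‖ *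
          ‖(1 - (α:ℂ)) * Complex.log (1 + (a:ℂ)/z)
            - (α:ℂ) * Complex.log (1 + (b:ℂ)/(z - (b:ℂ)))‖) l (nhds 0) := by
      have := hA.norm.mul hM0.norm
      simpa using this
    exact squeeze_zero_norm' hbound hrhs
  -- conclusion, part 2
  have h2 : Filter.Tendsto (fun z : ℂ => z * (f z - z)) l (nhds (-2 * (t:ℂ))) := by
    have hfin := hA.add hB
    rw [add_zero] at hfin
    apply Filter.Tendsto.congr' ?_ hfin
    filter_upwards [him] with z hz
    rw [hf z, TSA_pointwise α a b ha hb z hz]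
    ring
  refine ⟨?_, h2⟩
  have h1 := hinv.mul h2
  apply Filter.Tendsto.congr' ?_ (by simpa using h1)
  filter_upwards [him] with z hz
  have hz0 : z ≠ 0 := fun h => by simp [h] at hz
  rw [← mul_assoc, inv_mul_cancel₀ hz0, one_mul]
end

section
/- Let α ∈ (0,1), let c_α = 2(1−2α)/√(α(1−α)), and for t > 0 define f_t(z) = (z + 2√t·√(α/(1−α)))^{1−α} · (z − 2√t·√((1−α)/α))^{α} with principal branch powers. Then for every z ∈ ℍ and every t > 0 with z ≠ c_α√t, the function t ↦ f_t(z) is differentiable in t with ∂_t f_t(z) = −2·f_t′(z)/(z − c_α√t), where f_t′ denotes the complex derivative of f_t in z. (Equivalently, the inverse maps g_t = f_t^{−1} solve the chordal Loewner equation ∂_t g_t(w) = 2/(g_t(w) − U_t) with driving function U_t = c_α√t.) -/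
/-- For the tilted slit maps `f_t(z) = (z + 2√t·√(α/(1−α)))^{1−α} · (z − 2√t·√((1−α)/α))^α`
(principal branch powers), with `c_α = 2(1−2α)/√(α(1−α))`, for every `z` in the upper
half-plane and every `t > 0` with `z ≠ c_α√t`, the map `t ↦ f_t(z)` is differentiable in `t`
with derivative `−2·f_t′(z)/(z − c_α√t)`, where `f_t′` is the complex derivative in `z`. -/
theorem tilted_slit_inverse_loewner_pde
    (α : ℝ) (hα : α ∈ Set.Ioo (0 : ℝ) 1)
    (c : ℝ) (hc : c = 2 * (1 - 2 * α) / Real.sqrt (α * (1 - α)))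
    (f : ℝ → ℂ → ℂ)
    (hf : ∀ t : ℝ, ∀ z : ℂ, f t z =
      (z + ((2 * Real.sqrt t * Real.sqrt (α / (1 - α)) : ℝ) : ℂ)) ^ ((1 : ℂ) - (α : ℂ)) *
      (z - ((2 * Real.sqrt t * Real.sqrt ((1 - α) / α) : ℝ) : ℂ)) ^ ((α : ℝ) : ℂ)) :
    ∀ z : ℂ, 0 < z.im → ∀ t : ℝ, 0 < t → z ≠ ((c * Real.sqrt t : ℝ) : ℂ) →
      HasDerivAt (fun s : ℝ => f s z)
        (-2 * deriv (f t) z / (z - ((c * Real.sqrt t : ℝ) : ℂ))) t := by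
  obtain ⟨hα0, hα1⟩ := hα
  have h1α : 0 < 1 - α := by linarith
  intro z hz t ht hzc
  set a : ℝ := Real.sqrt (α / (1 - α)) with ha
  set b : ℝ := Real.sqrt ((1 - α) / α) with hb
  set st : ℝ := Real.sqrt t with hstdef
  have hst : 0 < st := Real.sqrt_pos.mpr ht
  have hsa : 0 < Real.sqrt α := Real.sqrt_pos.mpr hα0
  have hsb : 0 < Real.sqrt (1 - α) := Real.sqrt_pos.mpr h1α
  have hsa2 : Real.sqrt α ^ 2 = α := Real.sq_sqrt hα0.le
  have hsb2 : Real.sqrt (1 - α) ^ 2 = 1 - α := Real.sq_sqrt h1α.le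
  have ha' : a = Real.sqrt α / Real.sqrt (1 - α) := by
    rw [ha, Real.sqrt_div hα0.le]
  have hb' : b = Real.sqrt (1 - α) / Real.sqrt α := by
    rw [hb, Real.sqrt_div h1α.le]
  -- real identities
  have hab : a * b = 1 := by
    rw [ha', hb']; field_simp
  have h2 : (1 - α) * a = α * b := by
    rw [ha', hb']; field_simp
    linear_combination (1 - α) * hsa2 - α * hsb2
  have h3 : α * (a + b) = a := by
    rw [ha', hb']; field_simp
    linear_combination (α - 1) * hsa2 + α * hsb2
  have hc2 : c = 2 * (b - a) := by
    rw [hc, Real.sqrt_mul hα0.le, ha', hb']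
    field_simp
    linear_combination hsa2 - hsb2
  -- complex setup
  obtain ⟨A, hA⟩ : ∃ w : ℂ, w = z + ((2 * st * a : ℝ) : ℂ) := ⟨_, rfl⟩
  obtain ⟨B, hB⟩ : ∃ w : ℂ, w = z - ((2 * st * b : ℝ) : ℂ) := ⟨_, rfl⟩
  have hA_slit : (z + ((2 * st * a : ℝ) : ℂ)) ∈ Complex.slitPlane :=
    Complex.mem_slitPlane_iff.mpr (Or.inr (by simp; exact hz.ne'))
  have hB_slit : (z - ((2 * st * b : ℝ) : ℂ)) ∈ Complex.slitPlane :=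
    Complex.mem_slitPlane_iff.mpr (Or.inr (by simp; exact hz.ne'))
  have hA0 : A ≠ 0 := hA ▸ Complex.slitPlane_ne_zero hA_slit
  have hB0 : B ≠ 0 := hB ▸ Complex.slitPlane_ne_zero hB_slit
  have hzne : z - ((c * st : ℝ) : ℂ) ≠ 0 := sub_ne_zero.mpr hzc
  have hzne2 : z - (c : ℂ) * (st : ℝ) ≠ 0 := by push_cast at hzne; exact hzne
  have hstC : ((st : ℝ) : ℂ) ≠ 0 := by exact_mod_cast hst.ne'
  set αC : ℂ := (α : ℂ) with hαC
  -- complex key identities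
  have habC : (a : ℂ) * (b : ℂ) = 1 := by exact_mod_cast congrArg Complex.ofReal hab
  have h2C : (1 - αC) * (a : ℂ) = αC * (b : ℂ) := by
    rw [hαC]; exact_mod_cast congrArg Complex.ofReal h2
  have k1 : (1 - αC) * (a : ℂ) * B - αC * (b : ℂ) * A = -2 * (st : ℂ) := by
    rw [hA, hB]
    push_cast
    linear_combination z * h2C - 2 * (st : ℂ) * habC
  have k2 : z - (c : ℂ) * (st : ℂ) = (1 - αC) * B + αC * A := by
    rw [hA, hB]
    have h3C : αC * ((a : ℂ) + (b : ℂ)) = (a : ℂ) := by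
      rw [hαC]; exact_mod_cast congrArg Complex.ofReal h3
    have hcC : (c : ℂ) = 2 * ((b : ℂ) - (a : ℂ)) := by exact_mod_cast congrArg Complex.ofReal hc2
    push_cast
    linear_combination (-(st : ℂ)) * hcC - 2 * (st : ℂ) * h3C
  -- cpow splitting
  obtain ⟨P, hP⟩ : ∃ w : ℂ, w = A ^ (-αC) := ⟨_, rfl⟩
  obtain ⟨Q, hQ⟩ : ∃ w : ℂ, w = B ^ (αC - 1) := ⟨_, rfl⟩
  have hPA : A ^ ((1 : ℂ) - αC) = P * A := by
    rw [hP, show (1 : ℂ) - αC = -αC + 1 by ring, Complex.cpow_add _ _ hA0, Complex.cpow_one]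
  have hQB : B ^ αC = Q * B := by
    rw [hQ]
    conv_lhs => rw [show αC = (αC - 1) + 1 by ring, Complex.cpow_add _ _ hB0, Complex.cpow_one]
  have hexp1 : (1 : ℂ) - αC - 1 = -αC := by ring
  -- derivative in z
  have hfz : HasDerivAt (f t)
      (((1 : ℂ) - αC) * (z + ((2 * st * a : ℝ) : ℂ)) ^ ((1 : ℂ) - αC - 1) * 1
          * ((z - ((2 * st * b : ℝ) : ℂ)) ^ αC)
        + (z + ((2 * st * a : ℝ) : ℂ)) ^ ((1 : ℂ) - αC)
          * (αC * (z - ((2 * st * b : ℝ) : ℂ)) ^ (αC - 1) * 1)) z := by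
    have hfun : f t = fun w : ℂ =>
        (w + ((2 * st * a : ℝ) : ℂ)) ^ ((1 : ℂ) - αC) * (w - ((2 * st * b : ℝ) : ℂ)) ^ αC :=
      funext fun w => by rw [hf t w, hstdef]
    rw [hfun]
    have d1 : HasDerivAt (fun w : ℂ => w + ((2 * st * a : ℝ) : ℂ)) 1 z :=
      (hasDerivAt_id z).add_const _
    have d2 : HasDerivAt (fun w : ℂ => w - ((2 * st * b : ℝ) : ℂ)) 1 z :=
      (hasDerivAt_id z).sub_const _
    exact (d1.cpow_const hA_slit).mul (d2.cpow_const hB_slit)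
  have hderiv : deriv (f t) z = P * Q * (z - (c : ℂ) * (st : ℂ)) := by
    rw [hfz.deriv, hexp1, ← hA, ← hB, hPA, hQB, ← hP, ← hQ, k2]
    ring
  -- derivative in t
  have hsqrt : HasDerivAt Real.sqrt (1 / (2 * st)) t := Real.hasDerivAt_sqrt ht.ne'
  have hg1 : HasDerivAt (fun s : ℝ => 2 * Real.sqrt s * a) (2 * (1 / (2 * st)) * a) t :=
    (hsqrt.const_mul 2).mul_const a
  have hg2 : HasDerivAt (fun s : ℝ => 2 * Real.sqrt s * b) (2 * (1 / (2 * st)) * b) t :=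
    (hsqrt.const_mul 2).mul_const b
  have hA_t : HasDerivAt (fun s : ℝ => z + ((2 * Real.sqrt s * a : ℝ) : ℂ))
      (((2 * (1 / (2 * st)) * a : ℝ) : ℂ)) t := hg1.ofReal_comp.const_add z
  have hB_t : HasDerivAt (fun s : ℝ => z - ((2 * Real.sqrt s * b : ℝ) : ℂ))
      (-((2 * (1 / (2 * st)) * b : ℝ) : ℂ)) t := hg2.ofReal_comp.const_sub z
  have hcpA : HasDerivAt (fun s : ℝ => (z + ((2 * Real.sqrt s * a : ℝ) : ℂ)) ^ ((1 : ℂ) - αC))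
      (((2 * (1 / (2 * st)) * a : ℝ) : ℂ) •
        (((1 : ℂ) - αC) * (z + ((2 * st * a : ℝ) : ℂ)) ^ ((1 : ℂ) - αC - 1))) t :=
    HasDerivAt.scomp_of_eq t (Complex.hasStrictDerivAt_cpow_const hA_slit).hasDerivAt hA_t
      (by rw [hstdef])
  have hcpB : HasDerivAt (fun s : ℝ => (z - ((2 * Real.sqrt s * b : ℝ) : ℂ)) ^ αC)
      ((-((2 * (1 / (2 * st)) * b : ℝ) : ℂ)) •
        (αC * (z - ((2 * st * b : ℝ) : ℂ)) ^ (αC - 1))) t :=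
    HasDerivAt.scomp_of_eq t (Complex.hasStrictDerivAt_cpow_const hB_slit).hasDerivAt hB_t
      (by rw [hstdef])
  have hprod := hcpA.mul hcpB
  have hfun2 : (fun s : ℝ => f s z) = fun s : ℝ =>
      (z + ((2 * Real.sqrt s * a : ℝ) : ℂ)) ^ ((1 : ℂ) - αC) *
      (z - ((2 * Real.sqrt s * b : ℝ) : ℂ)) ^ αC := funext fun s => hf s z
  rw [hfun2]
  convert hprod using 1
  case e'_4 => rfl
  case e'_8 => rfl
  rw [show Real.sqrt t = st from hstdef.symm, hexp1, ← hA, ← hB]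
  rw [hderiv, hPA, hQB, ← hP, ← hQ]
  simp only [smul_eq_mul]
  push_cast
  field_simp [hzne2]
  linear_combination (-(P * Q)) * k1
end

section
/- Let α ∈ (0,1), t > 0, c_α = 2(1−2α)/√(α(1−α)), and f_t(z) = (z + 2√t·√(α/(1−α)))^{1−α} · (z − 2√t·√((1−α)/α))^{α} with principal branch powers. Then f_t maps the endpoint c_α√t of the driving function to the tip of the slit: f_t(c_α√t) = 2√t·((1−α)/α)^{(1−2α)/2} · e^{iπα}. In particular the slit produced by f_t is a segment of polar angle απ and length 2√t·((1−α)/α)^{(1−2α)/2}. -/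
/-- The tilted slit map `f_t` maps the endpoint `c_α√t` of the driving function to the tip
of the slit: `f_t(c_α√t) = 2√t·((1−α)/α)^{(1−2α)/2}·e^{iπα}`, a point at polar angle `απ`
and distance `2√t·((1−α)/α)^{(1−2α)/2}` from the origin. -/
theorem tilted_slit_tip
    (α t : ℝ) (hα : α ∈ Set.Ioo (0 : ℝ) 1) (ht : 0 < t)
    (c : ℝ) (hc : c = 2 * (1 - 2 * α) / Real.sqrt (α * (1 - α)))
    (f : ℂ → ℂ)
    (hf : ∀ z : ℂ, f z =
      (z + ((2 * Real.sqrt t * Real.sqrt (α / (1 - α)) : ℝ) : ℂ)) ^ ((1 : ℂ) - (α : ℂ)) *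
      (z - ((2 * Real.sqrt t * Real.sqrt ((1 - α) / α) : ℝ) : ℂ)) ^ ((α : ℝ) : ℂ)) :
    f ((c * Real.sqrt t : ℝ) : ℂ) =
      ((2 * Real.sqrt t * ((1 - α) / α) ^ ((1 - 2 * α) / 2) : ℝ) : ℂ) *
        Complex.exp ((Real.pi : ℂ) * (α : ℂ) * Complex.I) := by
  obtain ⟨hα0, hα1⟩ := hα
  have h1α : 0 < 1 - α := by linarith
  have hsa : 0 < Real.sqrt α := Real.sqrt_pos.mpr hα0
  have hs1a : 0 < Real.sqrt (1 - α) := Real.sqrt_pos.mpr h1α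
  have hst : 0 < Real.sqrt t := Real.sqrt_pos.mpr ht
  set u : ℝ := 2 * Real.sqrt t * Real.sqrt (α / (1 - α)) with hu
  set v : ℝ := 2 * Real.sqrt t * Real.sqrt ((1 - α) / α) with hv
  have hu' : u = 2 * Real.sqrt t * (Real.sqrt α / Real.sqrt (1 - α)) := by
    rw [hu, Real.sqrt_div hα0.le]
  have hv' : v = 2 * Real.sqrt t * (Real.sqrt (1 - α) / Real.sqrt α) := by
    rw [hv, Real.sqrt_div h1α.le]
  have hmul : Real.sqrt (α * (1 - α)) = Real.sqrt α * Real.sqrt (1 - α) :=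
    Real.sqrt_mul hα0.le _
  have hαsq : Real.sqrt α * Real.sqrt α = α := Real.mul_self_sqrt hα0.le
  have h1αsq : Real.sqrt (1 - α) * Real.sqrt (1 - α) = 1 - α := Real.mul_self_sqrt h1α.le
  have hz1 : c * Real.sqrt t + u = v := by
    rw [hc, hu', hv', hmul]
    field_simp
    linear_combination hαsq - h1αsq
  have hz2 : c * Real.sqrt t - v = -u := by
    rw [hc, hu', hv', hmul]
    field_simp
    linear_combination hαsq - h1αsq
  have hv0 : 0 ≤ v := by positivity
  have hu0 : 0 ≤ u := by positivity
  rw [hf]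
  rw [show ((((c * Real.sqrt t : ℝ)) : ℂ) + (u : ℂ)) = ((v : ℝ) : ℂ) by
      rw [← Complex.ofReal_add, hz1],
    show ((((c * Real.sqrt t : ℝ)) : ℂ) - (v : ℂ)) = ((-u : ℝ) : ℂ) by
      rw [← Complex.ofReal_sub, hz2]]
  rw [Complex.ofReal_cpow_of_nonpos (by simpa using hu0) ((α : ℝ) : ℂ)]
  rw [show ((1 : ℂ) - (α : ℂ)) = ((1 - α : ℝ) : ℂ) by push_cast; ring]
  rw [← Complex.ofReal_cpow hv0, Complex.ofReal_neg, neg_neg, ← Complex.ofReal_cpow hu0]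
  have h2t : (0:ℝ) < 2 * Real.sqrt t := by positivity
  have hr : (0:ℝ) < (1 - α) / α := by positivity
  have hr' : (0:ℝ) < α / (1 - α) := by positivity
  have key : v ^ (1 - α) * u ^ α
      = 2 * Real.sqrt t * ((1 - α) / α) ^ ((1 - 2 * α) / 2) := by
    have e1 : (2 * Real.sqrt t) ^ (1 - α) * (2 * Real.sqrt t) ^ α = 2 * Real.sqrt t := by
      rw [← Real.rpow_add h2t]; simp
    have hinv : Real.sqrt (α / (1 - α)) = ((1 - α) / α) ^ (-(1 / 2 : ℝ)) := by
      rw [show α / (1 - α) = ((1 - α) / α)⁻¹ by field_simp, Real.sqrt_inv,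
        Real.sqrt_eq_rpow]
      exact (Real.rpow_neg hr.le _).symm
    have e2 : Real.sqrt ((1 - α) / α) ^ (1 - α) * Real.sqrt (α / (1 - α)) ^ α
        = ((1 - α) / α) ^ ((1 - 2 * α) / 2) := by
      rw [Real.sqrt_eq_rpow, hinv, ← Real.rpow_mul hr.le, ← Real.rpow_mul hr.le,
        ← Real.rpow_add hr]
      ring_nf
    rw [hu, hv, Real.mul_rpow h2t.le (Real.sqrt_nonneg _),
      Real.mul_rpow h2t.le (Real.sqrt_nonneg _)]
    calc (2 * Real.sqrt t) ^ (1 - α) * Real.sqrt ((1 - α) / α) ^ (1 - α) *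
          ((2 * Real.sqrt t) ^ α * Real.sqrt (α / (1 - α)) ^ α)
        = ((2 * Real.sqrt t) ^ (1 - α) * (2 * Real.sqrt t) ^ α) *
          (Real.sqrt ((1 - α) / α) ^ (1 - α) * Real.sqrt (α / (1 - α)) ^ α) := by ring
      _ = 2 * Real.sqrt t * ((1 - α) / α) ^ ((1 - 2 * α) / 2) := by rw [e1, e2]
  have keyC : ((v ^ (1 - α) : ℝ) : ℂ) * ((u ^ α : ℝ) : ℂ)
      = ((2 * Real.sqrt t * ((1 - α) / α) ^ ((1 - 2 * α) / 2) : ℝ) : ℂ) := by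
    rw [← Complex.ofReal_mul, key]
  rw [show ((Real.pi : ℂ) * Complex.I * ((α : ℝ) : ℂ)) = ((Real.pi : ℂ) * (α : ℂ) * Complex.I) by ring]
  linear_combination Complex.exp ((Real.pi : ℂ) * (α : ℂ) * Complex.I) * keyC
end

section
/- Let α ∈ (0,1) and x, y > 0, and define φ(u) = ((u+y) : ℂ)^{1−α} · ((u−x) : ℂ)^{α} for real u, using principal branch complex powers. Then for every u ∈ (−y, x) one has φ(u) = (u+y)^{1−α}·(x−u)^{α}·e^{iπα} (with real powers of the positive numbers u+y and x−u), so φ(u) lies on the ray of polar angle απ; and φ maps the interval [−y, x] onto the closed segment {r·e^{iπα} : 0 ≤ r ≤ (x+y)·(1−α)^{1−α}·α^{α}}, with φ(−y) = φ(x) = 0. -/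
open Complex Set

private lemma gmean_le {a t s : ℝ} (ha : 0 < a) (ha1 : a < 1) (ht : 0 ≤ t) (hs : 0 ≤ s) :
    t ^ (1 - a) * s ^ a ≤ (t + s) * (1 - a) ^ (1 - a) * a ^ a := by
  have h1a : (0:ℝ) < 1 - a := by linarith
  have key := Real.geom_mean_le_arith_mean2_weighted h1a.le ha.le
    (div_nonneg ht h1a.le) (div_nonneg hs ha.le) (by ring)
  have e1 : (t / (1 - a)) ^ (1 - a) = t ^ (1 - a) / (1 - a) ^ (1 - a) :=
    Real.div_rpow ht h1a.le _
  have e2 : (s / a) ^ a = s ^ a / a ^ a := Real.div_rpow hs ha.le _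
  rw [e1, e2] at key
  have hp1 : (0:ℝ) < (1 - a) ^ (1 - a) := Real.rpow_pos_of_pos h1a _
  have hp2 : (0:ℝ) < a ^ a := Real.rpow_pos_of_pos ha _
  have : t ^ (1 - a) / (1 - a) ^ (1 - a) * (s ^ a / a ^ a) ≤ t + s := by
    calc t ^ (1 - a) / (1 - a) ^ (1 - a) * (s ^ a / a ^ a)
        ≤ (1 - a) * (t / (1 - a)) + a * (s / a) := key
      _ = t + s := by field_simp
  calc t ^ (1 - a) * s ^ a
      = (t ^ (1 - a) / (1 - a) ^ (1 - a) * (s ^ a / a ^ a)) * ((1 - a) ^ (1 - a) * a ^ a) := by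
        field_simp
    _ ≤ (t + s) * ((1 - a) ^ (1 - a) * a ^ a) := by
        apply mul_le_mul_of_nonneg_right this (by positivity)
    _ = (t + s) * (1 - a) ^ (1 - a) * a ^ a := by ring

/-- On the real axis, the angled-slit map `φ(u) = (u+y)^{1−α}(u−x)^α` (principal branch
powers, `x, y > 0`) satisfies `φ(u) = (u+y)^{1−α}(x−u)^α e^{iπα}` for `u ∈ (−y, x)` (real
powers of the positive reals `u+y`, `x−u`), maps `[−y, x]` onto the closed segment
`{r·e^{iπα} : 0 ≤ r ≤ (x+y)(1−α)^{1−α}α^α}`, and `φ(−y) = φ(x) = 0`. -/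
theorem angled_slit_map_on_interval
    (α x y : ℝ) (hα : α ∈ Set.Ioo (0 : ℝ) 1) (hx : 0 < x) (hy : 0 < y)
    (φ : ℝ → ℂ)
    (hφ : ∀ u : ℝ, φ u =
      (((u + y : ℝ) : ℂ)) ^ ((1 : ℂ) - (α : ℂ)) * (((u - x : ℝ) : ℂ)) ^ ((α : ℝ) : ℂ)) :
    (∀ u ∈ Set.Ioo (-y) x,
      φ u = (((u + y) ^ (1 - α) * (x - u) ^ α : ℝ) : ℂ) *
        Complex.exp ((Real.pi : ℂ) * (α : ℂ) * Complex.I)) ∧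
    φ '' Set.Icc (-y) x =
      {w : ℂ | ∃ r : ℝ, 0 ≤ r ∧ r ≤ (x + y) * (1 - α) ^ (1 - α) * α ^ α ∧
        w = (r : ℂ) * Complex.exp ((Real.pi : ℂ) * (α : ℂ) * Complex.I)} ∧
    φ (-y) = 0 ∧ φ x = 0 := by
  obtain ⟨hα0, hα1⟩ := hα
  have h1α : (0:ℝ) < 1 - α := by linarith
  set e : ℂ := Complex.exp ((Real.pi : ℂ) * (α : ℂ) * Complex.I) with he
  set g : ℝ → ℝ := fun u => (u + y) ^ (1 - α) * (x - u) ^ α with hg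
  set M : ℝ := (x + y) * (1 - α) ^ (1 - α) * α ^ α with hM
  -- step A: on the closed interval, φ u = g u * e
  have hA : ∀ u ∈ Icc (-y) x, φ u = (g u : ℂ) * e := by
    intro u hu
    rcases eq_or_lt_of_le hu.1 with h1 | h1
    · -- u = -y
      have : u + y = 0 := by linarith [h1.symm ▸ (rfl : u = u)]
      have hu' : u = -y := h1.symm
      rw [hφ, hg]
      simp only [hu']
      have h0 : ((-y + y : ℝ) : ℂ) = 0 := by push_cast; ring
      rw [h0, Complex.zero_cpow (by
        intro h
        have : (1:ℂ) = (α:ℂ) := by linear_combination h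
        exact (by exact_mod_cast hα1.ne' : ((1:ℝ):ℂ) ≠ (α:ℂ)) (by exact_mod_cast this))]
      simp [hg, Real.zero_rpow h1α.ne']
    rcases eq_or_lt_of_le hu.2 with h2 | h2
    · -- u = x
      rw [hφ, hg, h2]
      have h0 : ((x - x : ℝ) : ℂ) = 0 := by push_cast; ring
      rw [h0, Complex.zero_cpow (by exact_mod_cast hα0.ne')]
      simp [hg, Real.zero_rpow hα0.ne']
    · -- interior
      have huy : 0 < u + y := by linarith
      have hux : u - x < 0 := by linarith
      rw [hφ, hg]
      have e1 : (((u + y : ℝ)) : ℂ) ^ ((1 : ℂ) - (α : ℂ)) = (((u + y) ^ (1 - α) : ℝ) : ℂ) := by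
        rw [Complex.ofReal_cpow huy.le]
        push_cast
        ring_nf
      have e2 : (((u - x : ℝ)) : ℂ) ^ ((α : ℝ) : ℂ) = (((x - u) ^ α : ℝ) : ℂ) * e := by
        rw [Complex.ofReal_cpow_of_nonpos hux.le]
        have : (-(u - x : ℝ) : ℂ) = (((x - u : ℝ)) : ℂ) := by push_cast; ring
        rw [show (-((u - x : ℝ) : ℂ)) = (((x - u : ℝ)) : ℂ) by push_cast; ring,
          ← Complex.ofReal_cpow (by linarith : (0:ℝ) ≤ x - u)]
        rw [he]
        ring_nf
      rw [e1, e2]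
      push_cast
      ring
  -- continuity of g
  have hgc : Continuous g := by
    apply Continuous.mul
    · exact (Real.continuous_rpow_const h1α.le).comp (by continuity)
    · exact (Real.continuous_rpow_const hα0.le).comp (by continuity)
  -- step B: g '' Icc (-y) x = Icc 0 M
  have hgy : g (-y) = 0 := by
    simp [hg, Real.zero_rpow h1α.ne']
  have hgx : g x = 0 := by
    simp [hg, Real.zero_rpow hα0.ne']
  have hxy : (0:ℝ) < x + y := by linarith
  have hustar : g (x - α * (x + y)) = M := by
    simp only [hg, hM]
    have e1 : x - α * (x + y) + y = (1 - α) * (x + y) := by ring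
    have e2 : x - (x - α * (x + y)) = α * (x + y) := by ring
    rw [e1, e2, Real.mul_rpow h1α.le hxy.le, Real.mul_rpow hα0.le hxy.le]
    have key : (x + y) ^ (1 - α) * (x + y) ^ α = x + y := by
      rw [← Real.rpow_add hxy, sub_add_cancel, Real.rpow_one]
    calc (1 - α) ^ (1 - α) * (x + y) ^ (1 - α) * (α ^ α * (x + y) ^ α)
        = ((x + y) ^ (1 - α) * (x + y) ^ α) * ((1 - α) ^ (1 - α) * α ^ α) := by ring
      _ = (x + y) * (1 - α) ^ (1 - α) * α ^ α := by rw [key]; ring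
  have hB : g '' Icc (-y) x = Icc 0 M := by
    apply Subset.antisymm
    · rintro _ ⟨u, hu, rfl⟩
      constructor
      · exact mul_nonneg (Real.rpow_nonneg (by linarith [hu.1]) _)
          (Real.rpow_nonneg (by linarith [hu.2]) _)
      · have := gmean_le hα0 hα1 (by linarith [hu.1] : (0:ℝ) ≤ u + y)
          (by linarith [hu.2] : (0:ℝ) ≤ x - u)
        rw [show u + y + (x - u) = x + y by ring] at this
        exact this
    · have hsub : Icc (-y) (x - α * (x + y)) ⊆ Icc (-y) x := by
        apply Icc_subset_Icc le_rfl
        nlinarith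
      have hle : -y ≤ x - α * (x + y) := by nlinarith
      have := intermediate_value_Icc hle (hgc.continuousOn)
      rw [hgy, hustar] at this
      exact fun w hw => image_mono (f := g) hsub (this hw)
  refine ⟨?_, ?_, ?_, ?_⟩
  · intro u hu
    exact hA u (Ioo_subset_Icc_self hu)
  · have : φ '' Icc (-y) x = (fun r : ℝ => (r : ℂ) * e) '' (g '' Icc (-y) x) := by
      rw [← image_comp]
      exact image_congr hA
    rw [this, hB]
    ext w
    simp only [mem_image, mem_setOf_eq, mem_Icc]
    constructor
    · rintro ⟨r, ⟨h1, h2⟩, rfl⟩; exact ⟨r, h1, h2, rfl⟩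
    · rintro ⟨r, h1, h2, rfl⟩; exact ⟨r, ⟨h1, h2⟩, rfl⟩
  · rw [hA (-y) (by constructor <;> [exact le_rfl; linarith]), hgy]; simp
  · rw [hA x (by constructor <;> [linarith; exact le_rfl]), hgx]; simp
end
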